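/- arXiv:math/0505659 — 3 statements merged into one kernel-verified Lean document; each statement's English description precedes it below -/
import Mathlib

section
/- Suppose the characteristic polynomial P(x) = x^k + ∑_{j=0}^{k-1} a_j x^j has k distinct roots λ_1, …, λ_k, all nonzero. Define p_j(x) = ∑_{l=0}^{j} a_l x^l with the convention a_k = 1 absent, i.e., p_j is the partial sum of the low-order coefficients of P. Then the recursively defined coefficients satisfy b_j(n) = -∑_{l=1}^{k} λ_l^{n-j-1} p_j(λ_l) / P'(λ_l) for all n ≥ k and 0 ≤ j ≤ k-1. -/
open Polynomial Finset

lemma coeff_basis_top (k : ℕ) (lam : Fin k → ℂ) (i : Fin k) :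
    (Lagrange.basis Finset.univ lam i).coeff (k - 1) =
      Lagrange.nodalWeight Finset.univ lam i := by
  rw [Lagrange.basis_eq_prod_sub_inv_mul_nodal_div (Finset.mem_univ i),
    ← Lagrange.nodal_erase_eq_nodal_div (Finset.mem_univ i), coeff_C_mul]
  have hdeg : (Lagrange.nodal ((Finset.univ : Finset (Fin k)).erase i) lam).natDegree = k - 1 := by
    rw [Lagrange.natDegree_nodal, Finset.card_erase_of_mem (Finset.mem_univ i), Finset.card_univ,
      Fintype.card_fin]
  have := Lagrange.nodal_monic (s := (Finset.univ : Finset (Fin k)).erase i) (v := lam)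
  rw [← hdeg, this.coeff_natDegree, mul_one]

lemma key_sum (k : ℕ) (lam : Fin k → ℂ) (hinj : Function.Injective lam) (m : ℕ) (hm : m < k) :
    ∑ l : Fin k, lam l ^ m * Lagrange.nodalWeight Finset.univ lam l =
      if m = k - 1 then 1 else 0 := by
  have hcard : #(Finset.univ : Finset (Fin k)) = k := by simp
  have hd : (X ^ m : ℂ[X]).degree < #(Finset.univ : Finset (Fin k)) := by
    rw [hcard, degree_X_pow]
    exact_mod_cast hm
  have h := Lagrange.eq_interpolate (v := lam) hinj.injOn hd
  have h2 := congrArg (fun q : ℂ[X] => q.coeff (k - 1)) h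
  simp only [Lagrange.interpolate_apply, finset_sum_coeff, coeff_C_mul, eval_pow, eval_X,
    coeff_X_pow] at h2
  simp only [coeff_basis_top] at h2
  rw [← h2]
  simp [eq_comm]

theorem stmt_2 (k : ℕ) (hk : 1 ≤ k) (a : ℕ → ℂ) (lam : Fin k → ℂ)
    (hinj : Function.Injective lam) (hne : ∀ l, lam l ≠ 0)
    (P : ℂ[X])
    (hP : P = X ^ k + ∑ j ∈ Finset.range k, C (a j) * X ^ j)
    (hroots : P = ∏ l : Fin k, (X - C (lam l)))
    (b : ℕ → ℕ → ℂ)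
    (hbk : ∀ j < k, b j k = -a j)
    (hbrec : ∀ n ≥ k, ∀ j < k,
      b j (n + 1) = (if j = 0 then 0 else b (j - 1) n) - a j * b (k - 1) n) :
    ∀ n ≥ k, ∀ j < k,
      b j n = -∑ l : Fin k, lam l ^ (n - j - 1) *
        (∑ i ∈ Finset.range (j + 1), a i * lam l ^ i) /
          (Polynomial.derivative P).eval (lam l) := by
  set w : Fin k → ℂ := Lagrange.nodalWeight Finset.univ lam with hwdef
  have hnodal : P = Lagrange.nodal Finset.univ lam := by
    rw [hroots, Lagrange.nodal_eq]
  have hw : ∀ l, w l = ((Polynomial.derivative P).eval (lam l))⁻¹ := by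
    intro l
    rw [hwdef, hnodal]
    exact Lagrange.nodalWeight_eq_eval_derivative_nodal (Finset.mem_univ l)
  have heval : ∀ l, (Polynomial.derivative P).eval (lam l) = (w l)⁻¹ := by
    intro l
    rw [hw l, inv_inv]
  have hdiv : ∀ (x : ℂ) (l : Fin k), x / (Polynomial.derivative P).eval (lam l) = x * w l := by
    intro x l
    rw [heval l, div_eq_mul_inv, inv_inv]
  have hform : ∀ (n j : ℕ),
      (-∑ l : Fin k, lam l ^ (n - j - 1) * (∑ i ∈ Finset.range (j + 1), a i * lam l ^ i) /
          (Polynomial.derivative P).eval (lam l)) =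
      -∑ l : Fin k, lam l ^ (n - j - 1) * (∑ i ∈ Finset.range (j + 1), a i * lam l ^ i) * w l := by
    intro n j
    congr 1
    exact Finset.sum_congr rfl fun l _ => hdiv _ l
  have hroot : ∀ l : Fin k, ∑ i ∈ Finset.range k, a i * lam l ^ i = -(lam l ^ k) := by
    intro l
    have h0 : P.eval (lam l) = 0 := by
      rw [hroots, eval_prod]
      exact Finset.prod_eq_zero (Finset.mem_univ l) (by simp)
    rw [hP] at h0
    simp only [eval_add, eval_pow, eval_X, eval_finset_sum, eval_mul, eval_C] at h0
    linear_combination h0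
  -- the key "partial fraction" sums
  have hS : ∀ m < k, ∑ l : Fin k, lam l ^ m * w l = if m = k - 1 then 1 else 0 :=
    fun m hm => key_sum k lam hinj m hm
  intro n hn
  induction n, hn using Nat.le_induction with
  | base =>
    intro j hj
    rw [hbk j hj, hform]
    have hswap : ∑ l : Fin k, lam l ^ (k - j - 1) *
        (∑ i ∈ Finset.range (j + 1), a i * lam l ^ i) * w l =
        ∑ i ∈ Finset.range (j + 1), a i * ∑ l : Fin k, lam l ^ (k - j - 1 + i) * w l := by
      simp only [Finset.mul_sum, Finset.sum_mul]
      rw [Finset.sum_comm]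
      refine Finset.sum_congr rfl fun i _ => ?_
      refine Finset.sum_congr rfl fun l _ => ?_
      rw [pow_add]
      ring
    rw [hswap]
    have hval : ∀ i ∈ Finset.range (j + 1),
        a i * ∑ l : Fin k, lam l ^ (k - j - 1 + i) * w l = if i = j then a j else 0 := by
      intro i hi
      have hi' : i < j + 1 := Finset.mem_range.mp hi
      rw [hS _ (by omega)]
      rcases eq_or_ne i j with h | h
      · subst h; rw [if_pos (by omega), if_pos rfl, mul_one]
      · rw [if_neg (by omega), if_neg h, mul_zero]
    rw [Finset.sum_congr rfl hval, Finset.sum_ite_eq' (Finset.range (j + 1)) j fun _ => a j,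
      if_pos (Finset.self_mem_range_succ j)]
  | succ n hn ih =>
    intro j hj
    rw [hbrec n hn j hj, hform]
    have hpow : ∀ (l : Fin k) (m1 m2 : ℕ), m1 + m2 = n → lam l ^ m1 * lam l ^ m2 = lam l ^ n := by
      intro l m1 m2 h
      rw [← pow_add, h]
    -- b (k-1) n = ∑ λ^n w
    have hk1 : b (k - 1) n = ∑ l : Fin k, lam l ^ n * w l := by
      rw [ih (k - 1) (by omega), hform]
      rw [neg_eq_iff_eq_neg, ← Finset.sum_neg_distrib]
      refine Finset.sum_congr rfl fun l _ => ?_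
      have hr : k - 1 + 1 = k := by omega
      rw [hr, hroot l]
      have he : n - (k - 1) - 1 = n - k := by omega
      rw [he]
      have := hpow l (n - k) k (by omega)
      rw [← this]
      ring
    rcases Nat.eq_zero_or_pos j with hj0 | hj1
    · subst hj0
      rw [if_pos rfl, hk1, zero_sub, neg_inj, Finset.mul_sum]
      refine Finset.sum_congr rfl fun l _ => ?_
      have he : n + 1 - 0 - 1 = n := by omega
      rw [he, zero_add, Finset.sum_range_one]
      ring
    · rw [if_neg (by omega), hk1, ih (j - 1) (by omega), hform]
      have he1 : n - (j - 1) - 1 = n - j := by omega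
      have he2 : j - 1 + 1 = j := by omega
      have he3 : n + 1 - j - 1 = n - j := by omega
      rw [he1, he2, he3]
      have hsplit : ∀ l : Fin k,
          lam l ^ (n - j) * (∑ i ∈ Finset.range (j + 1), a i * lam l ^ i) * w l =
          lam l ^ (n - j) * (∑ i ∈ Finset.range j, a i * lam l ^ i) * w l +
            a j * (lam l ^ n * w l) := by
        intro l
        rw [Finset.sum_range_succ, ← hpow l (n - j) j (by omega)]
        ring
      rw [Finset.sum_congr rfl fun l _ => hsplit l, Finset.sum_add_distrib,
        ← Finset.mul_sum, neg_add]
      ring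
end

section
/- Suppose A is a k×k complex matrix with distinct nonzero eigenvalues λ_1, …, λ_k, with |λ_1| > |λ_l| for all l ≥ 2. Then for each 0 ≤ j ≤ k-1 with p_j(λ_1) ≠ 0, the coefficients b_j(n) in A^n = ∑_{j=0}^{k-1} b_j(n) A^j satisfy b_j(n) ~ -λ_1^{n-j-1} p_j(λ_1)/P'(λ_1) as n → ∞, i.e., the ratio b_j(n) / ( -λ_1^{n-j-1} p_j(λ_1)/P'(λ_1) ) tends to 1. -/
open Polynomial Finset Filter

lemma aux_q (P Q : ℂ[X]) (lam1 : ℂ) (hPQ : P = (X - C lam1) * Q) (m : ℕ) :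
    lam1 ^ (m + 1) * Q.coeff m = -(∑ i ∈ Finset.range (m + 1), P.coeff i * lam1 ^ i) := by
  induction m with
  | zero =>
    have h0 : P.coeff 0 = -(lam1 * Q.coeff 0) := by
      rw [hPQ, mul_coeff_zero]; simp
    simp [h0]
  | succ m ih =>
    have h : P.coeff (m + 1) = Q.coeff m - lam1 * Q.coeff (m + 1) := by
      rw [hPQ, sub_mul, coeff_sub, coeff_X_mul, coeff_C_mul]
    rw [Finset.sum_range_succ]
    linear_combination ih + lam1 ^ (m + 1) * h

theorem stmt_9 (k : ℕ) (hk : 1 ≤ k) (A : Matrix (Fin k) (Fin k) ℂ)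
    (a : ℕ → ℂ) (lam : Fin k → ℂ)
    (hinj : Function.Injective lam) (hne : ∀ l, lam l ≠ 0)
    (hdom : ∀ l : Fin k, l ≠ ⟨0, hk⟩ → ‖lam l‖ < ‖lam ⟨0, hk⟩‖)
    (hP : A.charpoly = X ^ k + ∑ j ∈ Finset.range k, C (a j) * X ^ j)
    (hroots : A.charpoly = ∏ l : Fin k, (X - C (lam l)))
    (b : ℕ → ℕ → ℂ)
    (hbk : ∀ j < k, b j k = -a j)
    (hbrec : ∀ n ≥ k, ∀ j < k,
      b j (n + 1) = (if j = 0 then 0 else b (j - 1) n) - a j * b (k - 1) n)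
    (hpow : ∀ n ≥ k, A ^ n = ∑ j ∈ Finset.range k, b j n • A ^ j)
    (j : ℕ) (hj : j < k)
    (hpj : (∑ i ∈ Finset.range (j + 1), a i * lam ⟨0, hk⟩ ^ i) ≠ 0) :
    Filter.Tendsto
      (fun n : ℕ => b j n /
        (-(lam ⟨0, hk⟩ ^ (n - j - 1) * (∑ i ∈ Finset.range (j + 1), a i * lam ⟨0, hk⟩ ^ i) /
          (Polynomial.derivative A.charpoly).eval (lam ⟨0, hk⟩))))
      Filter.atTop (nhds 1) := by
  set l1 : Fin k := ⟨0, hk⟩ with hl1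
  set P : ℂ[X] := A.charpoly with hPdef
  set lam1 : ℂ := lam l1 with hlam1
  have hvs : Set.InjOn lam (Finset.univ : Finset (Fin k)) := fun x _ y _ h => hinj h
  have hcard : (#(Finset.univ : Finset (Fin k)) : WithBot ℕ) = (k : WithBot ℕ) := by
    simp
  -- P facts
  have hPmonic : P.Monic := A.charpoly_monic
  have hPdeg : P.degree = (k : WithBot ℕ) := by
    rw [hPdef, A.charpoly_degree_eq_dim, Fintype.card_fin]
  have hPnatdeg : P.natDegree = k := by
    rw [hPdef, A.charpoly_natDegree_eq_dim, Fintype.card_fin]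
  have hPcoeffk : P.coeff k = 1 := by
    have := hPmonic.coeff_natDegree
    rwa [hPnatdeg] at this
  have hPcoeff : ∀ i < k, P.coeff i = a i := by
    intro i hi
    rw [hP, coeff_add, coeff_X_pow, if_neg (Nat.ne_of_lt hi), finset_sum_coeff]
    simp only [coeff_C_mul, coeff_X_pow]
    rw [Finset.sum_eq_single i]
    · simp
    · intro c _ hc; simp [Ne.symm hc]
    · intro h; exact absurd (Finset.mem_range.mpr hi) h
  have hProot : ∀ l : Fin k, P.eval (lam l) = 0 := by
    intro l
    rw [hroots, eval_prod]
    exact Finset.prod_eq_zero (Finset.mem_univ l) (by simp)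
  -- interpolation polynomials
  set r : ℕ → ℂ[X] := fun n => Lagrange.interpolate Finset.univ lam (fun l => lam l ^ n)
    with hrdef
  have hrdeg : ∀ n, (r n).degree < (k : WithBot ℕ) := by
    intro n
    have := Lagrange.degree_interpolate_lt (fun l => lam l ^ n) hvs
    rwa [Finset.card_univ, Fintype.card_fin] at this
  have hreval : ∀ n (l : Fin k), (r n).eval (lam l) = lam l ^ n := fun n l =>
    Lagrange.eval_interpolate_at_node _ hvs (Finset.mem_univ l)
  -- base: r k = X^k - P
  have hrk : r k = X ^ k - P := by
    symm
    show X ^ k - P = Lagrange.interpolate Finset.univ lam fun l => lam l ^ k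
    apply Lagrange.eq_interpolate_of_eval_eq _ hvs
    · rw [Finset.card_univ, Fintype.card_fin]
      have h1 : (X ^ k - P : ℂ[X]).degree < (X ^ k : ℂ[X]).degree := by
        apply degree_sub_lt
        · rw [hPdeg, degree_X_pow]
        · exact pow_ne_zero _ X_ne_zero
        · simp [hPmonic.leadingCoeff]
      rwa [degree_X_pow] at h1
    · intro i _
      simp [hProot i]
  -- step: r (n+1) = X * r n - C ((r n).coeff (k-1)) * P
  have hrstep : ∀ n, r (n + 1) = X * r n - C ((r n).coeff (k - 1)) * P := by
    intro n
    symm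
    show X * r n - C ((r n).coeff (k - 1)) * P =
      Lagrange.interpolate Finset.univ lam fun l => lam l ^ (n + 1)
    apply Lagrange.eq_interpolate_of_eval_eq _ hvs
    · rw [Finset.card_univ, Fintype.card_fin]
      rw [degree_lt_iff_coeff_zero]
      intro m hm
      obtain ⟨m', rfl⟩ : ∃ m', m = m' + 1 := ⟨m - 1, (Nat.succ_pred_eq_of_pos (hk.trans hm)).symm⟩
      rw [coeff_sub, coeff_X_mul, coeff_C_mul]
      rcases eq_or_lt_of_le hm with h | h
      · have : m' + 1 = k := h.symm
        have hm' : m' = k - 1 := by omega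
        rw [this, hPcoeffk, hm', mul_one, sub_self]
      · have h1 : (r n).coeff m' = 0 := by
          apply coeff_eq_zero_of_degree_lt
          refine lt_of_lt_of_le (hrdeg n) ?_
          exact_mod_cast (by omega : k ≤ m')
        have h2 : P.coeff (m' + 1) = 0 := by
          apply coeff_eq_zero_of_degree_lt
          rw [hPdeg]; exact_mod_cast h
        rw [h1, h2, mul_zero, sub_zero]
    · intro i _
      simp only [eval_sub, eval_mul, eval_X, eval_C, hreval n i, hProot i, mul_zero, sub_zero]
      ring
  -- b equals coefficients of r
  have hb : ∀ n, k ≤ n → ∀ j' < k, b j' n = (r n).coeff j' := by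
    intro n hn
    induction n, hn using Nat.le_induction with
    | base =>
      intro j' hj'
      rw [hbk j' hj', hrk, coeff_sub, coeff_X_pow, if_neg (Nat.ne_of_lt hj'), hPcoeff j' hj']
      ring
    | succ n hn ih =>
      intro j' hj'
      rw [hbrec n hn j' hj', hrstep n, coeff_sub, coeff_C_mul, hPcoeff j' hj',
        ih (k - 1) (by omega)]
      rcases Nat.eq_zero_or_pos j' with h0 | h0
      · subst h0
        simp [mul_comm]
      · obtain ⟨j'', rfl⟩ : ∃ j'', j' = j'' + 1 := ⟨j' - 1, by omega⟩
        rw [if_neg (by omega), coeff_X_mul]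
        simp only [Nat.add_sub_cancel]
        rw [ih j'' (by omega)]
        simp [mul_comm]
  -- coefficient expansion
  set w : Fin k → ℂ := fun l => (Lagrange.basis Finset.univ lam l).coeff j with hwdef
  have hcoeffr : ∀ n, (r n).coeff j = ∑ l : Fin k, lam l ^ n * w l := by
    intro n
    rw [hrdef]
    simp only [Lagrange.interpolate_apply, finset_sum_coeff, coeff_C_mul]
    rfl
  -- Q and derivative
  set Q : ℂ[X] := ∏ m ∈ Finset.univ.erase l1, (X - C (lam m)) with hQdef
  have hPQ : P = (X - C lam1) * Q := by
    rw [hroots, hQdef, hlam1]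
    exact (Finset.mul_prod_erase _ _ (Finset.mem_univ l1)).symm
  have hQeval : Q.eval lam1 = ∏ m ∈ Finset.univ.erase l1, (lam1 - lam m) := by
    rw [hQdef, eval_prod]; simp
  have hQne : Q.eval lam1 ≠ 0 := by
    rw [hQeval]
    apply Finset.prod_ne_zero_iff.mpr
    intro m hm
    have : m ≠ l1 := (Finset.mem_erase.mp hm).1
    exact sub_ne_zero.mpr fun h => this (hinj h.symm)
  have hderiv : (Polynomial.derivative P).eval lam1 = Q.eval lam1 := by
    rw [hPQ]
    simp [derivative_mul]
  -- basis formula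
  have hbasis : Lagrange.basis Finset.univ lam l1 = C ((Q.eval lam1)⁻¹) * Q := by
    rw [Lagrange.basis, hQdef, hQeval]
    unfold Lagrange.basisDivisor
    rw [Finset.prod_mul_distrib, ← map_prod, ← Finset.prod_inv_distrib]
  set p : ℂ := ∑ i ∈ Finset.range (j + 1), a i * lam1 ^ i with hpdef
  have hq : lam1 ^ (j + 1) * Q.coeff j = -p := by
    rw [aux_q P Q lam1 hPQ j, hpdef]
    congr 1
    apply Finset.sum_congr rfl
    intro i hi
    have hik : i < k := by have := Finset.mem_range.mp hi; omega
    rw [hPcoeff i hik]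
  have hwl1 : w l1 = (Q.eval lam1)⁻¹ * Q.coeff j := by
    rw [hwdef]
    simp [hbasis]
  -- nonzero facts
  have hlam1ne : lam1 ≠ 0 := hne l1
  set d : ℂ := (Polynomial.derivative P).eval lam1 with hddef
  have hdne : d ≠ 0 := by rw [hderiv]; exact hQne
  -- the dominant term
  set D : ℕ → ℂ := fun n => -(lam1 ^ (n - j - 1) * p / d) with hDdef
  have hDne : ∀ n, D n ≠ 0 := by
    intro n
    simp only [hDdef, neg_ne_zero, div_ne_zero_iff]
    exact ⟨mul_ne_zero (pow_ne_zero _ hlam1ne) hpj, hdne⟩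
  -- main eventual identity
  have hmain : ∀ n, k ≤ n → b j n / D n =
      1 + ∑ l ∈ Finset.univ.erase l1, (w l * (-d / p) * lam1 ^ (j + 1)) * (lam l / lam1) ^ n := by
    intro n hn
    have hnj : j + 1 ≤ n := by omega
    have hpow1 : lam1 ^ (n - j - 1) = lam1 ^ n / lam1 ^ (j + 1) := by
      have h : n - j - 1 = n - (j + 1) := by omega
      rw [h, pow_sub₀ _ hlam1ne hnj, div_eq_mul_inv]
    have hD : D n = -(lam1 ^ n / lam1 ^ (j + 1) * p / d) := by
      show -(lam1 ^ (n - j - 1) * p / d) = _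
      rw [hpow1]
    have hQcj : Q.coeff j = -p / lam1 ^ (j + 1) := by
      rw [eq_div_iff (pow_ne_zero _ hlam1ne)]
      linear_combination hq
    have hbn : b j n = ∑ l : Fin k, lam l ^ n * w l := by
      rw [hb n hn j hj, hcoeffr]
    rw [hbn, ← Finset.add_sum_erase _ _ (Finset.mem_univ l1), add_div]
    congr 1
    · rw [div_eq_one_iff_eq (hDne n), hwl1, ← hderiv, hQcj, hD]
      field_simp
      ring
    · rw [Finset.sum_div]
      apply Finset.sum_congr rfl
      intro l hl
      rw [hD, div_pow]
      field_simp
  -- the limit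
  show Tendsto (fun n : ℕ => b j n / D n) atTop (nhds 1)
  have h0 : Tendsto (fun n : ℕ => ∑ l ∈ Finset.univ.erase l1,
      (w l * (-d / p) * lam1 ^ (j + 1)) * (lam l / lam1) ^ n) atTop (nhds 0) := by
    have hz : (0 : ℂ) = ∑ l ∈ Finset.univ.erase l1, (0 : ℂ) := by simp
    rw [hz]
    apply tendsto_finset_sum
    intro l hl
    have habs : (0 : ℝ) < ‖lam1‖ := norm_pos_iff.mpr hlam1ne
    have hln : ‖lam l / lam1‖ < 1 := by
      rw [norm_div, div_lt_one habs]
      exact hdom l (Finset.mem_erase.mp hl).1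
    have := (tendsto_pow_atTop_nhds_zero_of_norm_lt_one hln).const_mul
      (w l * (-d / p) * lam1 ^ (j + 1))
    rwa [mul_zero] at this
  have hlim : Tendsto (fun n : ℕ => 1 + ∑ l ∈ Finset.univ.erase l1,
      (w l * (-d / p) * lam1 ^ (j + 1)) * (lam l / lam1) ^ n) atTop (nhds 1) := by
    have := (tendsto_const_nhds (x := (1:ℂ))).add h0
    rwa [add_zero] at this
  apply Filter.Tendsto.congr' _ hlim
  filter_upwards [eventually_ge_atTop k] with n hn
  exact (hmain n hn).symm
end

section
/- Let P(x) = x⁴ + x³ - 15x² - 9x + 54 = (x-2)(x-3)(x+3)², with coefficients a_0 = 54, a_1 = -9, a_2 = -15, a_3 = 1, and define b_j(n) by b_j(4) = -a_j, b_{-1}(n) = 0, b_j(n+1) = b_{j-1}(n) - a_j b_3(n). Then for all n ≥ 4: b_0(n) = -(1/5)n(-3)^n + (21/50)(-3)^n - (1/2)3^n + (27/25)2^n, b_1(n) = (1/10)n(-3)^n - (83/300)(-3)^n - (1/12)3^n + (9/25)2^n, b_2(n) = (1/45)n(-3)^n + (2/225)(-3)^n + (1/9)3^n - (3/25)2^n,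 and b_3(n) = -(1/90)n(-3)^n + (11/900)(-3)^n + (1/36)3^n - (1/25)2^n. -/
/-!
`b j n` is the coefficient of `x ^ j` in `x ^ n mod P`: multiplying `∑ j, b j n * x ^ j` by `x`
and reducing `x ^ 4 = -∑ j, a j * x ^ j` gives the recurrence. Such a recurrence determines its
solution from the values at the starting index, and since `P` has the roots `2`, `3` and the double
root `-3`, each `b j n` is a combination of `2 ^ n`, `3 ^ n`, `(-3) ^ n` and `n * (-3) ^ n`; the
stated closed forms are checked to satisfy the recurrence and the initial values directly.
-/

section CompanionRecurrence

variable {R : Type*} [Ring R]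

/-- Multiplication by `x` on remainders modulo the monic polynomial `x ^ d + ∑ j < d, a j * x ^ j`,
written in the coefficients `b j n`, `j < d`, for `n ≥ n₀`. -/
def IsCompanionRecurrence (d : ℕ) (a : ℕ → R) (n₀ : ℕ) (b : ℕ → ℕ → R) : Prop :=
  ∀ n ≥ n₀, ∀ j < d, b j (n + 1) = (if j = 0 then 0 else b (j - 1) n) - a j * b (d - 1) n

theorem IsCompanionRecurrence.eq_of_eq_at_start {d n₀ : ℕ} {a : ℕ → R} {b c : ℕ → ℕ → R}
    (hb : IsCompanionRecurrence d a n₀ b) (hc : IsCompanionRecurrence d a n₀ c)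
    (hstart : ∀ j < d, b j n₀ = c j n₀) :
    ∀ n ≥ n₀, ∀ j < d, b j n = c j n := by
  intro n hn
  induction n, hn using Nat.le_induction with
  | base => exact hstart
  | succ n hn ih =>
    intro j hj
    rw [hb n hn j hj, hc n hn j hj, ih (d - 1) (by omega)]
    split_ifs with hj0
    · rfl
    · rw [ih (j - 1) (by omega)]

end CompanionRecurrence

def closedForm : ℕ → ℕ → ℚ
  | 0, n => -(1/5) * n * (-3) ^ n + (21/50) * (-3) ^ n - (1/2) * 3 ^ n + (27/25) * 2 ^ n
  | 1, n => (1/10) * n * (-3) ^ n - (83/300) * (-3) ^ n - (1/12) * 3 ^ n + (9/25) * 2 ^ n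
  | 2, n => (1/45) * n * (-3) ^ n + (2/225) * (-3) ^ n + (1/9) * 3 ^ n - (3/25) * 2 ^ n
  | _, n => -(1/90) * n * (-3) ^ n + (11/900) * (-3) ^ n + (1/36) * 3 ^ n - (1/25) * 2 ^ n

section ClosedForm

variable {a : ℕ → ℚ}

theorem closedForm_isCompanionRecurrence (ha0 : a 0 = 54) (ha1 : a 1 = -9) (ha2 : a 2 = -15)
    (ha3 : a 3 = 1) (n₀ : ℕ) : IsCompanionRecurrence 4 a n₀ closedForm := by
  intro n _ j hj
  interval_cases j <;>
    norm_num [closedForm, ha0, ha1, ha2, ha3, pow_succ] <;> ring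

theorem closedForm_four (ha0 : a 0 = 54) (ha1 : a 1 = -9) (ha2 : a 2 = -15)
    (ha3 : a 3 = 1) : ∀ j < 4, closedForm j 4 = -a j := by
  intro j hj
  interval_cases j <;> norm_num [closedForm, ha0, ha1, ha2, ha3]

end ClosedForm

theorem stmt_10 (a : ℕ → ℚ) (ha0 : a 0 = 54) (ha1 : a 1 = -9) (ha2 : a 2 = -15)
    (ha3 : a 3 = 1)
    (b : ℕ → ℕ → ℚ)
    (hbk : ∀ j < 4, b j 4 = -a j)
    (hbrec : ∀ n ≥ 4, ∀ j < 4,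
      b j (n + 1) = (if j = 0 then 0 else b (j - 1) n) - a j * b 3 n) :
    ∀ n ≥ 4,
      b 0 n = -(1/5) * n * (-3) ^ n + (21/50) * (-3) ^ n - (1/2) * 3 ^ n + (27/25) * 2 ^ n ∧
      b 1 n = (1/10) * n * (-3) ^ n - (83/300) * (-3) ^ n - (1/12) * 3 ^ n + (9/25) * 2 ^ n ∧
      b 2 n = (1/45) * n * (-3) ^ n + (2/225) * (-3) ^ n + (1/9) * 3 ^ n - (3/25) * 2 ^ n ∧
      b 3 n = -(1/90) * n * (-3) ^ n + (11/900) * (-3) ^ n + (1/36) * 3 ^ n - (1/25) * 2 ^ n := by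
  have hb : IsCompanionRecurrence 4 a 4 b := hbrec
  have hstart : ∀ j < 4, b j 4 = closedForm j 4 := fun j hj ↦ by
    rw [hbk j hj, closedForm_four ha0 ha1 ha2 ha3 j hj]
  intro n hn
  have h := hb.eq_of_eq_at_start (closedForm_isCompanionRecurrence ha0 ha1 ha2 ha3 4) hstart n hn
  exact ⟨h 0 (by norm_num), h 1 (by norm_num), h 2 (by norm_num), h 3 (by norm_num)⟩
end
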